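/- arXiv:0812.0377 — 7 statements merged into one kernel-verified Lean document; each statement's English description precedes it below -/
import Mathlib

section
/- Let s ≥ 1 and let α_1, …, α_{2s} be real numbers satisfying the consistency condition Σ_{i=1}^{2s} α_i = 1 and the third-order order condition Σ_{i=1}^{2s} α_i³ = 0. Set α_0 = 0 and α_{2s+1} = 0. Then there exists an index i ∈ {1, …, s} with α_{2i−1} + α_{2i} < 0, and there exists an index j ∈ {1, …, s+1} with α_{2j−2} + α_{2j−1} < 0. (Consequently, any splitting method ψ_h = φ^{[b]}_{b_{s+1}h} ∘ φ^{[a]}_{a_s h} ∘ ⋯ ∘ φ^{[a]}_{a_1 h} ∘ φ^{[b]}_{b_1 h} of order r ≥ 3 must have some negative coefficient a_i and some negative coefficient b_j.) -/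
open Finset

private lemma key_lemma (n : ℕ) (x y : ℕ → ℝ)
    (hsum : ∑ k ∈ range n, (x k + y k) = 1)
    (hcube : ∑ k ∈ range n, ((x k) ^ 3 + (y k) ^ 3) = 0) :
    ∃ k ∈ range n, x k + y k < 0 := by
  by_contra h
  push_neg at h
  have h4 : ∀ k ∈ range n, (x k + y k) ^ 3 ≤ 4 * ((x k) ^ 3 + (y k) ^ 3) := by
    intro k hk
    have := h k hk
    nlinarith [mul_nonneg this (sq_nonneg (x k - y k))]
  have hle : ∑ k ∈ range n, (x k + y k) ^ 3 ≤ 0 := by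
    calc ∑ k ∈ range n, (x k + y k) ^ 3
        ≤ ∑ k ∈ range n, 4 * ((x k) ^ 3 + (y k) ^ 3) := Finset.sum_le_sum h4
      _ = 4 * ∑ k ∈ range n, ((x k) ^ 3 + (y k) ^ 3) := by rw [Finset.mul_sum]
      _ = 0 := by rw [hcube]; ring
  have hex : ∃ k ∈ range n, 0 < x k + y k := by
    by_contra hno
    push_neg at hno
    have : ∀ k ∈ range n, x k + y k = 0 := fun k hk => le_antisymm (hno k hk) (h k hk)
    rw [Finset.sum_congr rfl this] at hsum
    simp at hsum
  obtain ⟨k, hk, hkpos⟩ := hex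
  have : 0 < ∑ k ∈ range n, (x k + y k) ^ 3 := by
    apply Finset.sum_pos' (fun j hj => pow_nonneg (h j hj) 3) ⟨k, hk, pow_pos hkpos 3⟩
  linarith

private lemma sum_Icc_pair (f : ℕ → ℝ) (s : ℕ) :
    ∑ i ∈ Icc 1 (2 * s), f i = ∑ k ∈ range s, (f (2 * k + 1) + f (2 * k + 2)) := by
  induction s with
  | zero => simp
  | succ n ih =>
      have h2 : 2 * (n + 1) = (2 * n + 1) + 1 := by ring
      rw [Finset.sum_range_succ, ← ih, h2,
        Finset.sum_Icc_succ_top (by omega), Finset.sum_Icc_succ_top (by omega)]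
      ring_nf

private lemma sum_pair0 (f : ℕ → ℝ) (s : ℕ) :
    ∑ k ∈ range (s + 1), (f (2 * k) + f (2 * k + 1)) = ∑ i ∈ Icc 0 (2 * s + 1), f i := by
  induction s with
  | zero =>
      rw [Finset.sum_range_succ, Finset.sum_range_zero,
        show 2 * 0 + 1 = 0 + 1 from rfl, Finset.sum_Icc_succ_top (by omega)]
      simp
  | succ n ih =>
      have h2 : 2 * (n + 1) + 1 = (2 * n + 1) + 1 + 1 := by ring
      rw [h2, Finset.sum_Icc_succ_top (by omega), Finset.sum_Icc_succ_top (by omega),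
        Finset.sum_range_succ, ih]
      ring

/-- Any splitting/composition coefficient sequence `α₁, …, α_{2s}` (extended by
`α₀ = α_{2s+1} = 0`) satisfying the consistency condition `∑ αᵢ = 1` and the
third-order condition `∑ αᵢ³ = 0` must have some pair sum
`aᵢ = α_{2i-1} + α_{2i} < 0` and some pair sum `bⱼ = α_{2j-2} + α_{2j-1} < 0`. -/
theorem negative_coefficients_unavoidable
    (s : ℕ) (hs : 1 ≤ s) (α : ℕ → ℝ)
    (h0 : α 0 = 0) (htop : α (2 * s + 1) = 0)
    (hconsistency : ∑ i ∈ Icc 1 (2 * s), α i = 1)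
    (horder3 : ∑ i ∈ Icc 1 (2 * s), (α i) ^ 3 = 0) :
    (∃ i ∈ Icc 1 s, α (2 * i - 1) + α (2 * i) < 0) ∧
    (∃ j ∈ Icc 1 (s + 1), α (2 * j - 2) + α (2 * j - 1) < 0) := by
  -- extended sums over Icc 0 (2s+1)
  have hext : ∀ f : ℕ → ℝ, f 0 = 0 → f (2 * s + 1) = 0 →
      ∑ i ∈ Icc 0 (2 * s + 1), f i = ∑ i ∈ Icc 1 (2 * s), f i := by
    intro f hf0 hftop
    rw [Finset.sum_Icc_succ_top (by omega), hftop, add_zero,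
      show Finset.Icc 0 (2 * s) = insert 0 (Finset.Icc 1 (2 * s)) by
        ext x; simp [Finset.mem_Icc, Finset.mem_insert]; omega,
      Finset.sum_insert (by simp), hf0, zero_add]
  constructor
  · obtain ⟨k, hk, hklt⟩ := key_lemma s (fun k => α (2 * k + 1)) (fun k => α (2 * k + 2))
      (by rw [← sum_Icc_pair]; exact hconsistency)
      (by rw [← sum_Icc_pair (fun i => α i ^ 3)]; exact horder3)
    refine ⟨k + 1, by simp at hk ⊢; omega, ?_⟩
    have h1 : 2 * (k + 1) - 1 = 2 * k + 1 := by omega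
    have h2 : 2 * (k + 1) = 2 * k + 2 := by omega
    rw [h1, h2]; exact hklt
  · obtain ⟨k, hk, hklt⟩ := key_lemma (s + 1) (fun k => α (2 * k)) (fun k => α (2 * k + 1))
      (by rw [sum_pair0, hext α h0 htop]; exact hconsistency)
      (by rw [sum_pair0 (fun i => α i ^ 3)]
          rw [hext (fun i => α i ^ 3) (by simp [h0]) (by simp [htop])]
          exact horder3)
    refine ⟨k + 1, by simp at hk ⊢; omega, ?_⟩
    have h1 : 2 * (k + 1) - 2 = 2 * k := by omega
    have h2 : 2 * (k + 1) - 1 = 2 * k + 1 := by omega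
    rw [h1, h2]; exact hklt
end

section
/- Let 0 < h < 2 and set c(h) = 2·arcsin(h/2) / (h·√(4 − h²)). Then the 2×2 real matrix exponential satisfies exp( h·c(h)·[[h, 2], [−2, −h]] ) = [[1, h], [−h, 1 − h²]]. That is, the symplectic Euler step for the harmonic oscillator is the exact time-h flow of the perturbed Hamiltonian H̃(q, p, h) = c(h)·(p² + h p q + q²), whose linear Hamiltonian vector field is c(h)·[[h, 2], [−2, −h]]. -/
/-!
Since `A = !![h, 2; -2, -h]` satisfies `A * A = (h² - 4) • 1`, the rescaled matrix
`J = A / √(4 - h²)` is a complex structure, `J * J = -1`, and the exponential series of `θ • J`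
splits into the cosine and sine series: `exp (θ • J) = cos θ • 1 + sin θ • J`.
For `θ = 2 arcsin (h / 2)`, which is `h * c * √(4 - h²)`, one has `cos θ = 1 - h² / 2` and
`sin θ = (h / 2) √(4 - h²)`, so `exp ((h * c) • A) = (1 - h² / 2) • 1 + (h / 2) • A`,
the symplectic Euler matrix.
-/

open NormedSpace Real Nat

section ComplexStructure

variable {𝔸 : Type*} [Ring 𝔸] [Algebra ℝ 𝔸] [TopologicalSpace 𝔸] [ContinuousSMul ℝ 𝔸] {J : 𝔸}

theorem hasSum_expSeries_smul_of_mul_self_eq_neg_one [ContinuousAdd 𝔸] (hJ : J * J = -1)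
    (t : ℝ) :
    HasSum (fun n : ℕ => (n !⁻¹ : ℝ) • (t • J) ^ n) (algebraMap ℝ 𝔸 (cos t) + sin t • J) := by
  have hJ_even (n : ℕ) : J ^ (2 * n) = algebraMap ℝ 𝔸 ((-1) ^ n) := by
    rw [pow_mul, sq, hJ, map_pow, map_neg, map_one]
  refine HasSum.even_add_odd ?_ ?_
  · convert (Real.hasSum_cos t).smul_const (1 : 𝔸) using 1
    · ext n
      rw [smul_pow, hJ_even, Algebra.algebraMap_eq_smul_one, smul_smul, smul_smul]
      congr 1
      ring
    · rw [Algebra.algebraMap_eq_smul_one]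
  · convert (Real.hasSum_sin t).smul_const J using 1
    ext n
    rw [smul_pow, pow_succ J, hJ_even, ← Algebra.smul_def, smul_smul, smul_smul]
    congr 1
    ring

theorem exp_smul_of_mul_self_eq_neg_one [IsTopologicalRing 𝔸] [T2Space 𝔸] (hJ : J * J = -1)
    (t : ℝ) : exp (t • J) = algebraMap ℝ 𝔸 (cos t) + sin t • J := by
  rw [exp_eq_tsum ℝ]
  exact (hasSum_expSeries_smul_of_mul_self_eq_neg_one hJ t).tsum_eq

end ComplexStructure

theorem cos_two_mul_arcsin {x : ℝ} (hx₁ : -1 ≤ x) (hx₂ : x ≤ 1) :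
    cos (2 * arcsin x) = 1 - 2 * x ^ 2 := by
  rw [cos_two_mul, cos_arcsin, sq_sqrt (by nlinarith)]
  ring

theorem sin_two_mul_arcsin {x : ℝ} (hx₁ : -1 ≤ x) (hx₂ : x ≤ 1) :
    sin (2 * arcsin x) = 2 * x * √(1 - x ^ 2) := by
  rw [sin_two_mul, sin_arcsin hx₁ hx₂, cos_arcsin]

theorem Matrix.fin_two_traceless_mul_self {R : Type*} [CommRing R] (a b : R) :
    (!![a, b; -b, -a] : Matrix (Fin 2) (Fin 2) R) * !![a, b; -b, -a] = (a ^ 2 - b ^ 2) • 1 := by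
  ext i j
  fin_cases i <;> fin_cases j <;> simp [Matrix.mul_apply] <;> ring

/-- For `0 < h < 2` and `c(h) = 2 arcsin(h/2) / (h √(4 - h²))`, the symplectic
Euler step `[[1, h], [-h, 1 - h²]]` for the harmonic oscillator is the exact
time-`h` flow of the perturbed quadratic Hamiltonian
`H̃ = c(h) (p² + h p q + q²)`, whose linear vector field matrix is
`c(h)·[[h, 2], [-2, -h]]`. -/
theorem symplectic_euler_exact_flow_of_modified_hamiltonian
    (h : ℝ) (h0 : 0 < h) (h2 : h < 2)
    (c : ℝ) (hc : c = 2 * Real.arcsin (h / 2) / (h * Real.sqrt (4 - h ^ 2))) :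
    NormedSpace.exp ((h * c) • (!![h, 2; -2, -h] : Matrix (Fin 2) (Fin 2) ℝ)) =
      !![1, h; -h, 1 - h ^ 2] := by
  set A : Matrix (Fin 2) (Fin 2) ℝ := !![h, 2; -2, -h]
  set ω := √(4 - h ^ 2)
  have hω : ω ^ 2 = 4 - h ^ 2 := sq_sqrt (by nlinarith)
  have hω0 : 0 < ω := sqrt_pos.2 (by nlinarith)
  have hJ : ω⁻¹ • A * ω⁻¹ • A = -1 := by
    rw [smul_mul_smul, Matrix.fin_two_traceless_mul_self, smul_smul, ← neg_one_smul ℝ]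
    congr 1
    field_simp
    linarith
  have hflow : (h * c) • A = (2 * arcsin (h / 2)) • ω⁻¹ • A := by
    rw [smul_smul, hc]
    field_simp
  have hsqrt : √(1 - (h / 2) ^ 2) = ω / 2 := by
    rw [show 1 - (h / 2) ^ 2 = (ω / 2) ^ 2 by rw [div_pow ω, hω]; ring, sqrt_sq (by positivity)]
  rw [hflow, exp_smul_of_mul_self_eq_neg_one hJ, cos_two_mul_arcsin (by linarith) (by linarith),
    sin_two_mul_arcsin (by linarith) (by linarith), hsqrt, Algebra.algebraMap_eq_smul_one,
    smul_smul]
  ext i j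
  fin_cases i <;> fin_cases j <;> simp [A] <;> field_simp <;> ring
end

section
/- Let s ≥ 1 and let a_1, …, a_s and b_1, …, b_{s+1} be real numbers satisfying the palindromic symmetry a_{s+1−i} = a_i for i = 1, …, s and b_{s+2−i} = b_i for i = 1, …, s+1. Define K(h) = L(b_{s+1}h) · U(a_s h) · L(b_s h) ⋯ L(b_2 h) · U(a_1 h) · L(b_1 h). Then for all h ∈ ℝ: (i) K(h) · K(−h) = I (the method is time-symmetric), and (ii) the two diagonal entries of K(h) are equal. -/
/-- The exact time-1 flow of `x' = x·A` for the harmonic oscillator split: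
an upper triangular shear (drift). -/
def driftU (x : ℝ) : Matrix (Fin 2) (Fin 2) ℝ := !![1, x; 0, 1]

/-- The exact time-1 flow of `x' = x·B` for the harmonic oscillator split:
a lower triangular shear (kick). -/
def kickL (x : ℝ) : Matrix (Fin 2) (Fin 2) ℝ := !![1, 0; -x, 1]

/-- The stability matrix
`K(h) = L(b_{s+1}h) · U(a_s h) · L(b_s h) ⋯ L(b_2 h) · U(a_1 h) · L(b_1 h)`
of the splitting method with coefficients `a_1, …, a_s`, `b_1, …, b_{s+1}`
applied to the harmonic oscillator. -/
def stabilityMatrix (a b : ℕ → ℝ) : ℕ → ℝ → Matrix (Fin 2) (Fin 2) ℝ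
  | 0, h => kickL (b 1 * h)
  | n + 1, h => kickL (b (n + 2) * h) * driftU (a (n + 1) * h) * stabilityMatrix a b n h

open Matrix

/-- The reversed-order product `L(b_1 h) · U(a_1 h) · L(b_2 h) ⋯ U(a_n h) · L(b_{n+1} h)`. -/
def revProd (a b : ℕ → ℝ) : ℕ → ℝ → Matrix (Fin 2) (Fin 2) ℝ
  | 0, h => kickL (b 1 * h)
  | n + 1, h => revProd a b n h * driftU (a (n + 1) * h) * kickL (b (n + 2) * h)

lemma kickL_mul_kickL (x y : ℝ) : kickL x * kickL y = kickL (x + y) := by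
  simp [kickL, Matrix.mul_fin_two]; ring_nf

lemma driftU_mul_driftU (x y : ℝ) : driftU x * driftU y = driftU (x + y) := by
  simp [driftU, Matrix.mul_fin_two]; ring_nf

lemma kickL_zero : kickL 0 = 1 := by
  simp [kickL, Matrix.one_fin_two]

lemma driftU_zero : driftU 0 = 1 := by
  simp [driftU, Matrix.one_fin_two]

/-- Telescoping: `K(h) · R(-h) = 1`. -/
lemma stab_mul_revProd_neg (a b : ℕ → ℝ) : ∀ n (h : ℝ),
    stabilityMatrix a b n h * revProd a b n (-h) = 1 := by
  intro n
  induction n with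
  | zero =>
      intro h
      simp [stabilityMatrix, revProd, kickL_mul_kickL, mul_neg, kickL_zero]
  | succ n ih =>
      intro h
      show (kickL (b (n + 2) * h) * driftU (a (n + 1) * h) * stabilityMatrix a b n h) *
        (revProd a b n (-h) * driftU (a (n + 1) * -h) * kickL (b (n + 2) * -h)) = 1
      calc (kickL (b (n + 2) * h) * driftU (a (n + 1) * h) * stabilityMatrix a b n h) *
          (revProd a b n (-h) * driftU (a (n + 1) * -h) * kickL (b (n + 2) * -h))
          = kickL (b (n + 2) * h) * driftU (a (n + 1) * h) *
            ((stabilityMatrix a b n h * revProd a b n (-h)) * (driftU (a (n + 1) * -h) *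
            kickL (b (n + 2) * -h))) := by simp only [mul_assoc]
        _ = 1 := by
            rw [ih, one_mul, mul_assoc, ← mul_assoc (driftU (a (n + 1) * h)),
              driftU_mul_driftU, mul_neg, add_neg_cancel, driftU_zero, one_mul,
              kickL_mul_kickL, mul_neg, add_neg_cancel, kickL_zero]

/-- `revProd` only depends on the relevant coefficients. -/
lemma revProd_congr {a b a' b' : ℕ → ℝ} : ∀ n (h : ℝ),
    (∀ i ∈ Finset.Icc 1 n, a i = a' i) → (∀ i ∈ Finset.Icc 1 (n + 1), b i = b' i) →
    revProd a b n h = revProd a' b' n h := by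
  intro n
  induction n with
  | zero =>
      intro h _ hb
      simp only [revProd]
      rw [hb 1 (by simp)]
  | succ n ih =>
      intro h ha hb
      simp only [revProd]
      rw [ih h (fun i hi => ha i (Finset.mem_Icc.2 ⟨(Finset.mem_Icc.1 hi).1,
            (Finset.mem_Icc.1 hi).2.trans (Nat.le_succ n)⟩))
          (fun i hi => hb i (Finset.mem_Icc.2 ⟨(Finset.mem_Icc.1 hi).1,
            (Finset.mem_Icc.1 hi).2.trans (Nat.le_succ (n + 1))⟩)),
        ha (n + 1) (by simp), hb (n + 2) (by simp)]

/-- Peel the rightmost two factors of the stability matrix. -/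
lemma stab_peel (a b : ℕ → ℝ) : ∀ n (h : ℝ),
    stabilityMatrix a b (n + 1) h =
      stabilityMatrix (fun i => a (i + 1)) (fun i => b (i + 1)) n h *
        driftU (a 1 * h) * kickL (b 1 * h) := by
  intro n
  induction n with
  | zero =>
      intro h
      simp only [stabilityMatrix]
  | succ n ih =>
      intro h
      show kickL (b (n + 3) * h) * driftU (a (n + 2) * h) * stabilityMatrix a b (n + 1) h = _
      rw [ih h]
      simp only [stabilityMatrix]
      simp only [mul_assoc]

/-- The stability matrix equals the reversed product of the reversed coefficients. -/
lemma stab_eq_revProd_rev : ∀ (n : ℕ) (a b : ℕ → ℝ) (h : ℝ),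
    stabilityMatrix a b n h =
      revProd (fun i => a (n + 1 - i)) (fun i => b (n + 2 - i)) n h := by
  intro n
  induction n with
  | zero =>
      intro a b h
      simp [stabilityMatrix, revProd]
  | succ n ih =>
      intro a b h
      rw [stab_peel, ih (fun i => a (i + 1)) (fun i => b (i + 1)) h]
      show revProd (fun i => a (n + 1 - i + 1)) (fun i => b (n + 2 - i + 1)) n h *
          driftU (a 1 * h) * kickL (b 1 * h) = _
      simp only [revProd]
      have e1 : n + 1 + 1 - (n + 1) = 1 := by omega
      have e2 : n + 1 + 2 - (n + 2) = 1 := by omega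
      rw [e1, e2, revProd_congr n h
        (fun i hi => by
          rcases Finset.mem_Icc.1 hi with ⟨h1, h2⟩
          show a (n + 1 - i + 1) = a (n + 1 + 1 - i)
          congr 1
          omega)
        (fun i hi => by
          rcases Finset.mem_Icc.1 hi with ⟨h1, h2⟩
          show b (n + 2 - i + 1) = b (n + 1 + 2 - i)
          congr 1
          omega)]

/-- The swap matrix. -/
def Jmat : Matrix (Fin 2) (Fin 2) ℝ := !![0, 1; 1, 0]

lemma Jmat_mul_Jmat : Jmat * Jmat = 1 := by
  simp [Jmat, Matrix.mul_fin_two, Matrix.one_fin_two]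

lemma Jconj_mul (X Y : Matrix (Fin 2) (Fin 2) ℝ) :
    (Jmat * X * Jmat) * (Jmat * Y * Jmat) = Jmat * (X * Y) * Jmat := by
  have h1 : (Jmat * X * Jmat) * (Jmat * Y * Jmat)
      = Jmat * X * ((Jmat * Jmat) * (Y * Jmat)) := by simp only [mul_assoc]
  rw [h1, Jmat_mul_Jmat, one_mul]
  simp only [mul_assoc]

lemma kickL_transpose (x : ℝ) : (kickL x)ᵀ = driftU (-x) := by
  ext i j; fin_cases i <;> fin_cases j <;> simp [kickL, driftU]

lemma driftU_transpose (x : ℝ) : (driftU x)ᵀ = kickL (-x) := by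
  ext i j; fin_cases i <;> fin_cases j <;> simp [kickL, driftU]

lemma Jmat_conj_kickL_transpose (x : ℝ) : Jmat * (kickL x)ᵀ * Jmat = kickL x := by
  rw [kickL_transpose]
  simp [Jmat, kickL, driftU, Matrix.mul_fin_two]

lemma Jmat_conj_driftU_transpose (x : ℝ) : Jmat * (driftU x)ᵀ * Jmat = driftU x := by
  rw [driftU_transpose]
  simp [Jmat, kickL, driftU, Matrix.mul_fin_two]

lemma Jmat_conj_stab (a b : ℕ → ℝ) : ∀ n (h : ℝ),
    Jmat * (stabilityMatrix a b n h)ᵀ * Jmat = revProd a b n h := by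
  intro n
  induction n with
  | zero =>
      intro h
      exact Jmat_conj_kickL_transpose _
  | succ n ih =>
      intro h
      show Jmat * (kickL (b (n + 2) * h) * driftU (a (n + 1) * h) * stabilityMatrix a b n h)ᵀ *
        Jmat = _
      rw [Matrix.transpose_mul, Matrix.transpose_mul, ← Jconj_mul, ← Jconj_mul, ih,
        Jmat_conj_driftU_transpose, Jmat_conj_kickL_transpose, ← mul_assoc]
      rfl

lemma Jconj_apply (M : Matrix (Fin 2) (Fin 2) ℝ) : (Jmat * M * Jmat) 0 0 = M 1 1 := by
  conv_lhs => rw [Matrix.eta_fin_two M]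
  simp [Jmat, Matrix.mul_fin_two]

/-- For a palindromic (left-right symmetric) splitting method applied to the
harmonic oscillator, the stability matrix satisfies `K(h)·K(-h) = I`
(time-symmetry) and has equal diagonal entries. -/
theorem stabilityMatrix_symmetric_method
    (s : ℕ) (hs : 1 ≤ s) (a b : ℕ → ℝ)
    (ha : ∀ i ∈ Finset.Icc 1 s, a (s + 1 - i) = a i)
    (hb : ∀ i ∈ Finset.Icc 1 (s + 1), b (s + 2 - i) = b i) :
    ∀ h : ℝ,
      stabilityMatrix a b s h * stabilityMatrix a b s (-h) = 1 ∧
      (stabilityMatrix a b s h) 0 0 = (stabilityMatrix a b s h) 1 1 := by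
  have key : ∀ h : ℝ, stabilityMatrix a b s h = revProd a b s h := by
    intro h
    rw [stab_eq_revProd_rev]
    exact revProd_congr s h ha hb
  intro h
  constructor
  · rw [key (-h)]
    exact stab_mul_revProd_neg a b s h
  · have hJ := Jmat_conj_stab a b s h
    rw [← key h] at hJ
    calc (stabilityMatrix a b s h) 0 0
        = (Jmat * (stabilityMatrix a b s h)ᵀ * Jmat) 0 0 := by rw [hJ]
      _ = (stabilityMatrix a b s h)ᵀ 1 1 := Jconj_apply _
      _ = (stabilityMatrix a b s h) 1 1 := rfl
end

section
/- Let K = [[p, b], [c, p]] be a 2×2 real matrix with equal diagonal entries and determinant 1 (i.e., p² − bc = 1). Then the set of powers {Kⁿ : n ∈ ℕ} is bounded (in any norm on 2×2 real matrices) if and only if there exist real numbers φ and γ with γ ≠ 0 such that p = cos φ and b = −γ²·c. -/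
/-!
Since `K = p + N` with `N² = bc = p² - 1`, the powers of `K` are written with Chebyshev
polynomials: `Kⁿ = [[Tₙ(p), b Uₙ₋₁(p)], [c Uₙ₋₁(p), Tₙ(p)]]`. If `|p| > 1` then
`|Tₙ(p)| = cosh (n arcosh |p|)` is unbounded; if `|p| = 1` then `|Uₙ₋₁(p)| = n`, so boundedness
forces `b = c = 0`; if `|p| < 1` then `bc = p² - 1 < 0`, which yields `γ`. Conversely, when
`b = -γ² c` the identity `det Kⁿ = 1` reads `Tₙ(p)² + (γ c Uₙ₋₁(p))² = 1`, bounding every entry.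
-/

open Polynomial Polynomial.Chebyshev Real

theorem pow_eq_chebyshev {R : Type*} [CommRing R] {p b c : R} (h : p ^ 2 - b * c = 1) (n : ℕ) :
    !![p, b; c, p] ^ n =
      !![(T R n).eval p, b * (U R (n - 1)).eval p; c * (U R (n - 1)).eval p, (T R n).eval p] := by
  induction n with
  | zero => simp [Matrix.one_fin_two]
  | succ n ih =>
    have hT := T_eq_X_mul_T_sub_pol_U R (n - 1)
    have hU := U_eq_X_mul_U_add_T R (n - 1)
    rw [sub_add_cancel] at hT hU
    rw [show (n : ℤ) - 1 + 2 = (n + 1 : ℕ) by push_cast; ring] at hT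
    rw [pow_succ, ih, Matrix.mul_fin_two, hT, show ((n + 1 : ℕ) : ℤ) - 1 = n by push_cast; ring, hU]
    simp only [eval_add, eval_sub, eval_mul, eval_X, eval_pow, eval_one]
    rw [show (1 : R) - p ^ 2 = -(b * c) by linear_combination -h]
    simp only [EmbeddingLike.apply_eq_iff_eq, Matrix.vecCons_inj, and_true]
    refine ⟨⟨?_, ?_⟩, ?_, ?_⟩ <;> ring

theorem T_eval_sq_sub_mul_U_eval_sq {R : Type*} [CommRing R] {p b c : R}
    (h : p ^ 2 - b * c = 1) (n : ℕ) :
    (T R n).eval p ^ 2 - b * c * (U R (n - 1)).eval p ^ 2 = 1 := by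
  have hdet := congrArg Matrix.det (pow_eq_chebyshev h n)
  rw [Matrix.det_pow, Matrix.det_fin_two_of, Matrix.det_fin_two_of, ← sq, h, one_pow] at hdet
  linear_combination -hdet

theorem abs_T_eval_abs (x : ℝ) (n : ℤ) : |(T ℝ n).eval (|x|)| = |(T ℝ n).eval x| := by
  rcases abs_choice x with hx | hx <;> rw [hx]
  rw [T_eval_neg, abs_mul]
  simp

theorem exists_lt_abs_T_eval {x : ℝ} (hx : 1 < |x|) (C : ℝ) : ∃ n : ℕ, C < |(T ℝ n).eval x| := by
  set θ := arcosh |x|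
  have hθ : 0 < θ := arcosh_pos hx
  obtain ⟨n, hn⟩ := exists_nat_gt (2 * C / θ)
  refine ⟨n, ?_⟩
  rw [← abs_T_eval_abs, ← cosh_arcosh hx.le, T_real_cosh]
  have hcosh : n * θ + 1 ≤ 2 * cosh (n * θ) := by
    rw [cosh_eq]
    linarith [add_one_le_exp (n * θ), exp_pos (-(n * θ))]
  rw [div_lt_iff₀ hθ] at hn
  rw [abs_of_pos (cosh_pos _)]
  push_cast
  linarith

theorem abs_U_eval_of_sq_eq_one {x : ℝ} (hx : x ^ 2 = 1) (n : ℤ) :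
    |(U ℝ n).eval x| = |(n : ℝ) + 1| := by
  rcases sq_eq_one_iff.mp hx with rfl | rfl
  · rw [U_eval_one]
  · rw [U_eval_neg_one, abs_mul]
    simp

theorem eq_zero_of_forall_abs_mul_U_eval_le {x a C : ℝ} (hx : x ^ 2 = 1)
    (h : ∀ n : ℕ, |a * (U ℝ (n - 1)).eval x| ≤ C) : a = 0 := by
  by_contra ha
  obtain ⟨n, hn⟩ := exists_nat_gt (C / |a|)
  have := h n
  rw [abs_mul, abs_U_eval_of_sq_eq_one hx, Int.cast_sub, Int.cast_one, sub_add_cancel,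
    Int.cast_natCast, Nat.abs_cast] at this
  rw [div_lt_iff₀ (abs_pos.mpr ha)] at hn
  linarith

theorem exists_ne_zero_eq_neg_sq_mul {b c : ℝ} (h : b * c < 0 ∨ b = 0 ∧ c = 0) :
    ∃ γ : ℝ, γ ≠ 0 ∧ b = -γ ^ 2 * c := by
  rcases h with hbc | ⟨rfl, rfl⟩
  · have hc : c ≠ 0 := by rintro rfl; simp at hbc
    have hpos : 0 < -b / c := by
      rw [← mul_div_mul_right _ _ hc]
      exact div_pos (by linarith) (mul_self_pos.mpr hc)
    refine ⟨√(-b / c), (sqrt_pos.mpr hpos).ne', ?_⟩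
    rw [sq_sqrt hpos.le]
    field_simp
  · exact ⟨1, one_ne_zero, by ring⟩

theorem forall_abs_apply_le_iff {a b c d C : ℝ} :
    (∀ i j, |!![a, b; c, d] i j| ≤ C) ↔ |a| ≤ C ∧ |b| ≤ C ∧ |c| ≤ C ∧ |d| ≤ C := by
  simp [Fin.forall_fin_two, and_assoc]

theorem abs_T_eval_le_and_abs_mul_U_eval_le {p c γ : ℝ} (hγ : γ ≠ 0)
    (h : p ^ 2 + γ ^ 2 * c ^ 2 = 1) (n : ℕ) :
    |(T ℝ n).eval p| ≤ 1 ∧ |-γ ^ 2 * c * (U ℝ (n - 1)).eval p| ≤ |γ| ∧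
      |c * (U ℝ (n - 1)).eval p| ≤ |γ|⁻¹ := by
  set s := c * (U ℝ (n - 1)).eval p
  have hpell : (T ℝ n).eval p ^ 2 + (γ * s) ^ 2 = 1 := by
    linear_combination
      T_eval_sq_sub_mul_U_eval_sq (p := p) (b := -γ ^ 2 * c) (c := c) (by linear_combination h) n
  have hγs : |γ * s| ≤ 1 := (sq_le_one_iff_abs_le_one _).mp (by nlinarith)
  refine ⟨(sq_le_one_iff_abs_le_one _).mp (by nlinarith), ?_, ?_⟩
  · calc |-γ ^ 2 * c * (U ℝ (n - 1)).eval p| = |γ| * |γ * s| := by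
          rw [show -γ ^ 2 * c * (U ℝ (n - 1)).eval p = -(γ * (γ * s)) by ring, abs_neg,
            abs_mul]
      _ ≤ |γ| := mul_le_of_le_one_right (abs_nonneg γ) hγs
  · calc |s| = |γ|⁻¹ * |γ * s| := by rw [abs_mul γ s, inv_mul_cancel_left₀ (abs_ne_zero.mpr hγ)]
      _ ≤ |γ|⁻¹ := mul_le_of_le_one_right (inv_nonneg.mpr (abs_nonneg γ)) hγs

/-- A 2×2 real matrix `K = [[p, b], [c, p]]` with equal diagonal entries and
determinant 1 has bounded powers (boundedness being independent of the chosen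
norm, expressed here entrywise) if and only if there exist `φ` and `γ ≠ 0`
with `p = cos φ` and `b = -γ² c`. -/
theorem stability_criterion
    (p b c : ℝ) (hdet : p ^ 2 - b * c = 1)
    (K : Matrix (Fin 2) (Fin 2) ℝ) (hK : K = !![p, b; c, p]) :
    (∃ C : ℝ, ∀ (n : ℕ) (i j : Fin 2), |(K ^ n) i j| ≤ C) ↔
      ∃ φ γ : ℝ, γ ≠ 0 ∧ p = Real.cos φ ∧ b = -γ ^ 2 * c := by
  subst hK
  simp only [pow_eq_chebyshev hdet, forall_abs_apply_le_iff]
  constructor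
  · rintro ⟨C, hC⟩
    have hp : |p| ≤ 1 := by
      by_contra! hp
      obtain ⟨n, hn⟩ := exists_lt_abs_T_eval hp C
      exact hn.not_ge (hC n).1
    have hbc : b * c < 0 ∨ b = 0 ∧ c = 0 := by
      rcases hp.lt_or_eq with hp | hp
      · left
        nlinarith [abs_lt.mp hp]
      · have hp : p ^ 2 = 1 := by rw [← sq_abs, hp, one_pow]
        exact Or.inr ⟨eq_zero_of_forall_abs_mul_U_eval_le hp fun n ↦ (hC n).2.1,
          eq_zero_of_forall_abs_mul_U_eval_le hp fun n ↦ (hC n).2.2.1⟩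
    obtain ⟨γ, hγ, hb⟩ := exists_ne_zero_eq_neg_sq_mul hbc
    exact ⟨arccos p, γ, hγ, (cos_arccos (abs_le.mp hp).1 (abs_le.mp hp).2).symm, hb⟩
  · rintro ⟨-, γ, hγ, -, rfl⟩
    refine ⟨1 + |γ| + |γ|⁻¹, fun n ↦ ?_⟩
    obtain ⟨ht, hb, hc⟩ :=
      abs_T_eval_le_and_abs_mul_U_eval_le (p := p) (c := c) hγ (by linear_combination hdet) n
    have hγ₀ := abs_nonneg γ
    have hγ₁ := inv_nonneg.mpr hγ₀
    refine ⟨by linarith, by linarith, by linarith, by linarith⟩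
end

section
/- For every integer s ≥ 1 and every α = (α_1, …, α_{2s}) ∈ ℝ^{2s}, the polynomial identity u_{11}(α) = ½·( u_1(α)² − u_2(α) ) holds. -/
open Finset

/-- `j* = j - 1` if `j` is even, `j* = j` if `j` is odd. -/
def jstar (j : ℕ) : ℕ := if Even j then j - 1 else j

/-- `u_1(α) = ∑_{j=1}^{2s} α_j`. -/
def u1 (s : ℕ) (α : ℕ → ℝ) : ℝ := ∑ j ∈ Icc 1 (2 * s), α j

/-- `u_2(α) = ∑_{j=1}^{2s} (-1)^j α_j²`. -/
def u2 (s : ℕ) (α : ℕ → ℝ) : ℝ := ∑ j ∈ Icc 1 (2 * s), (-1 : ℝ) ^ j * (α j) ^ 2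

/-- `u_3(α) = ∑_{j=1}^{2s} α_j³`. -/
def u3 (s : ℕ) (α : ℕ → ℝ) : ℝ := ∑ j ∈ Icc 1 (2 * s), (α j) ^ 3

/-- `u_{11}(α) = ∑_{1 ≤ j_1 ≤ j_2*, j_2 ≤ 2s} α_{j_1} α_{j_2}`. -/
def u11 (s : ℕ) (α : ℕ → ℝ) : ℝ :=
  ∑ j2 ∈ Icc 1 (2 * s), (∑ j1 ∈ Icc 1 (jstar j2), α j1) * α j2

/-- `u_{12}(α) = ∑_{1 ≤ j_1 ≤ j_2*, j_2 ≤ 2s} α_{j_1} (-1)^{j_2} α_{j_2}²`. -/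
def u12 (s : ℕ) (α : ℕ → ℝ) : ℝ :=
  ∑ j2 ∈ Icc 1 (2 * s), (∑ j1 ∈ Icc 1 (jstar j2), α j1) * ((-1 : ℝ) ^ j2 * (α j2) ^ 2)

/-- `u_{21}(α) = ∑_{1 ≤ j_1 ≤ j_2*, j_2 ≤ 2s} (-1)^{j_1} α_{j_1}² α_{j_2}`. -/
def u21 (s : ℕ) (α : ℕ → ℝ) : ℝ :=
  ∑ j2 ∈ Icc 1 (2 * s), (∑ j1 ∈ Icc 1 (jstar j2), (-1 : ℝ) ^ j1 * (α j1) ^ 2) * α j2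

/-- `u_{111}(α) = ∑_{1 ≤ j_1 ≤ j_2*, j_2 ≤ j_3*, j_3 ≤ 2s} α_{j_1} α_{j_2} α_{j_3}`. -/
def u111 (s : ℕ) (α : ℕ → ℝ) : ℝ :=
  ∑ j3 ∈ Icc 1 (2 * s),
    (∑ j2 ∈ Icc 1 (jstar j3), (∑ j1 ∈ Icc 1 (jstar j2), α j1) * α j2) * α j3

lemma jstar_odd (n : ℕ) : jstar (2 * n + 1) = 2 * n + 1 := by
  simp [jstar, Nat.even_add_one, Nat.even_iff]

lemma jstar_even (n : ℕ) : jstar (2 * n + 2) = 2 * n + 1 := by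
  have : Even (2 * n + 2) := ⟨n + 1, by ring⟩
  simp [jstar, this]

lemma u11_identity' (s : ℕ) (α : ℕ → ℝ) :
    u11 s α = (1 / 2) * ((u1 s α) ^ 2 - u2 s α) := by
  induction s with
  | zero => simp [u11, u1, u2]
  | succ n ih =>
    have h2 : 2 * (n + 1) = (2 * n + 1) + 1 := by ring
    have h1 : 2 * n + 1 = (2 * n) + 1 := by ring
    have e1 : ∀ f : ℕ → ℝ, ∑ j ∈ Icc 1 (2 * (n + 1)), f j
        = (∑ j ∈ Icc 1 (2 * n), f j) + f (2 * n + 1) + f (2 * n + 2) := by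
      intro f
      rw [h2, Finset.sum_Icc_succ_top (by omega), h1,
        Finset.sum_Icc_succ_top (by omega)]
    have hu1 : u1 (n + 1) α = u1 n α + α (2 * n + 1) + α (2 * n + 2) := e1 _
    have hu2 : u2 (n + 1) α = u2 n α - (α (2 * n + 1)) ^ 2 + (α (2 * n + 2)) ^ 2 := by
      rw [u2, e1]
      have hodd : (-1 : ℝ) ^ (2 * n + 1) = -1 := by
        rw [pow_succ, pow_mul]; norm_num
      have heven : (-1 : ℝ) ^ (2 * n + 2) = 1 := by
        rw [pow_succ, pow_succ, pow_mul]; norm_num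
      rw [hodd, heven, u2]; ring
    have hu11 : u11 (n + 1) α = u11 n α
        + (u1 n α + α (2 * n + 1)) * α (2 * n + 1)
        + (u1 n α + α (2 * n + 1)) * α (2 * n + 2) := by
      rw [u11, e1, u11, jstar_odd, jstar_even, h1,
        Finset.sum_Icc_succ_top (by omega), u1]
    rw [hu11, hu1, hu2, ih]; ring

/-- `u_{11}(α) = ½ (u_1(α)² − u_2(α))`. -/
theorem u11_identity (s : ℕ) (hs : 1 ≤ s) (α : ℕ → ℝ) :
    u11 s α = (1 / 2) * ((u1 s α) ^ 2 - u2 s α) := u11_identity' s α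
end

section
/- For every integer s ≥ 1 and every α = (α_1, …, α_{2s}) ∈ ℝ^{2s}, the polynomial identity u_{12}(α) + u_{21}(α) = u_1(α)·u_2(α) − u_3(α) holds. -/
open Finset

lemma key (α : ℕ → ℝ) (n : ℕ) :
    (∑ j2 ∈ Icc 1 n, (∑ j1 ∈ Icc 1 (jstar j2), α j1) * ((-1 : ℝ) ^ j2 * (α j2) ^ 2))
      + (∑ j2 ∈ Icc 1 n, (∑ j1 ∈ Icc 1 (jstar j2), (-1 : ℝ) ^ j1 * (α j1) ^ 2) * α j2)
    = (∑ j ∈ Icc 1 n, α j) * (∑ j ∈ Icc 1 n, (-1 : ℝ) ^ j * (α j) ^ 2)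
      - ∑ j ∈ Icc 1 n, (α j) ^ 3 := by
  induction n with
  | zero => simp
  | succ n ih =>
    rw [Finset.sum_Icc_succ_top (by omega), Finset.sum_Icc_succ_top (by omega),
        Finset.sum_Icc_succ_top (by omega), Finset.sum_Icc_succ_top (by omega),
        Finset.sum_Icc_succ_top (by omega)]
    by_cases h : Even (n + 1)
    · have hj : jstar (n + 1) = n := by simp [jstar, h]
      have hp : ((-1 : ℝ)) ^ (n + 1) = 1 := h.neg_one_pow
      rw [hj, hp]
      nlinarith [ih]
    · have hj : jstar (n + 1) = n + 1 := by simp [jstar, h]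
      have hp : ((-1 : ℝ)) ^ (n + 1) = -1 := (Nat.odd_iff.mpr (by
        rcases Nat.even_or_odd (n+1) with h'|h'
        · exact absurd h' h
        · exact Nat.odd_iff.mp h')).neg_one_pow
      rw [hj, hp, Finset.sum_Icc_succ_top (by omega), Finset.sum_Icc_succ_top (by omega)]
      rw [hp]
      nlinarith [ih]

/-- `u_{12}(α) + u_{21}(α) = u_1(α)·u_2(α) − u_3(α)`. -/
theorem u12_add_u21_identity (s : ℕ) (hs : 1 ≤ s) (α : ℕ → ℝ) :
    u12 s α + u21 s α = u1 s α * u2 s α - u3 s α := by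
  simpa [u12, u21, u1, u2, u3] using key α (2 * s)
end

section
/- For every integer s ≥ 1 and every α = (α_1, …, α_{2s}) ∈ ℝ^{2s}, the polynomial identity u_{111}(α) = (1/6)·u_1(α)³ − (1/2)·u_1(α)·u_2(α) + (1/3)·u_3(α) holds. -/
open Finset

theorem u111_key (s : ℕ) (α : ℕ → ℝ) :
    u11 s α = (1 / 2) * ((u1 s α) ^ 2 - u2 s α) ∧
    u111 s α = (1 / 6) * (u1 s α) ^ 3 - (1 / 2) * (u1 s α * u2 s α) + (1 / 3) * u3 s α := by
  induction s with
  | zero => simp [u1, u2, u3, u11, u111]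
  | succ n ih =>
    obtain ⟨ih1, ih2⟩ := ih
    set a := α (2 * n + 1) with ha
    set b := α (2 * n + 2) with hb
    have split : ∀ f : ℕ → ℝ,
        ∑ j ∈ Icc 1 (2 * (n + 1)), f j
          = (∑ j ∈ Icc 1 (2 * n), f j) + f (2 * n + 1) + f (2 * n + 2) := by
      intro f
      have h : 2 * (n + 1) = (2 * n + 1) + 1 := by ring
      rw [h, Finset.sum_Icc_succ_top (by omega), Finset.sum_Icc_succ_top (by omega)]
    have splitO : ∀ f : ℕ → ℝ,
        ∑ j ∈ Icc 1 (2 * n + 1), f j = (∑ j ∈ Icc 1 (2 * n), f j) + f (2 * n + 1) := by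
      intro f
      rw [Finset.sum_Icc_succ_top (by omega)]
    have js1 : jstar (2 * n + 1) = 2 * n + 1 := by
      unfold jstar
      rw [if_neg]
      rintro ⟨r, hr⟩; omega
    have js2 : jstar (2 * n + 2) = 2 * n + 1 := by
      unfold jstar
      rw [if_pos ⟨n + 1, by ring⟩]; omega
    have p1 : (-1 : ℝ) ^ (2 * n + 1) = -1 := Odd.neg_one_pow ⟨n, by ring⟩
    have p2 : (-1 : ℝ) ^ (2 * n + 2) = 1 := Even.neg_one_pow ⟨n + 1, by ring⟩
    have e1 : u1 (n + 1) α = u1 n α + a + b := by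
      rw [u1, split]; rfl
    have e2 : u2 (n + 1) α = u2 n α - a ^ 2 + b ^ 2 := by
      simp only [u2, split, p1, p2]; ring
    have e3 : u3 (n + 1) α = u3 n α + a ^ 3 + b ^ 3 := by
      rw [u3, split]; rfl
    have e11 : u11 (n + 1) α = u11 n α + (u1 n α + a) * a + (u1 n α + a) * b := by
      rw [u11, split, js1, js2, splitO]; rfl
    have e111 : u111 (n + 1) α
        = u111 n α + (u11 n α + (u1 n α + a) * a) * a + (u11 n α + (u1 n α + a) * a) * b := by
      rw [u111, split, js1, js2, splitO, js1, splitO]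
      rfl
    constructor
    · rw [e11, e1, e2, ih1]; ring
    · rw [e111, e1, e2, e3, ih1, ih2]; ring

/-- `u_{111}(α) = (1/6) u_1(α)³ − (1/2) u_1(α) u_2(α) + (1/3) u_3(α)`. -/
theorem u111_identity (s : ℕ) (hs : 1 ≤ s) (α : ℕ → ℝ) :
    u111 s α = (1 / 6) * (u1 s α) ^ 3 - (1 / 2) * (u1 s α * u2 s α) + (1 / 3) * u3 s α := by
  exact (u111_key s α).2
end
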